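/- arXiv:math-ph/0501013 — 2 statements merged into one kernel-verified Lean document; each statement's English description precedes it below -/
import Mathlib

section
/- With ε(q) = 2·Σ_{i=1}^{3} (1 − cos qᵢ), the inequality (2π)^{−3} ∫_{[−π,π]³} cos(q₁)·ε(q)^{−1} dq > 0 holds. -/
/-! Let `V = vol(cube3)`, `J = ∫ 1/ε` and `K = ∫ cos q₀ / ε` over the cube. Permuting coordinates
preserves `ε` and the cube, so `K` is also the integral of `cos qᵢ / ε` for each `i`, and summing
`∑ᵢ cos qᵢ = 3 - ε/2` over `i` gives `3K = 3J - V/2`, i.e. `K = J - V/6`. Since each `cos qᵢ` has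
mean zero, `ε` has mean `6`; as `x⁻¹` lies above its tangent `6⁻¹ - (x - 6)/36` at `6`, strictly
where `x ≠ 6`, this forces `J > V/6`, hence `K > 0`. The integral `J` is finite because
`ε(q) ≥ (4/π²)‖q‖²` on the cube and `‖q‖⁻²` is locally integrable in dimension three. -/

open MeasureTheory Real

noncomputable section

/-- The cube `[-π,π]³` in `ℝ³`, a fundamental domain for the torus `𝕋³`. -/
def cube3 : Set (Fin 3 → ℝ) := Set.Icc (fun _ => -π) (fun _ => π)

/-- The dispersion relation of the discrete Laplacian on `ℤ³`. -/
def εD (q : Fin 3 → ℝ) : ℝ := 2 * ∑ i, (1 - Real.cos (q i))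

lemma inv_sub_div_sq_lt_inv {a x : ℝ} (ha : 0 < a) (hx : 0 < x) (hxa : x ≠ a) :
    a⁻¹ - (x - a) / a ^ 2 < x⁻¹ := by
  have hgap : x⁻¹ - (a⁻¹ - (x - a) / a ^ 2) = (x - a) ^ 2 / (a ^ 2 * x) := by
    field_simp; ring
  have : 0 < (x - a) ^ 2 := by positivity [sub_ne_zero.2 hxa]
  have : 0 < (x - a) ^ 2 / (a ^ 2 * x) := by positivity
  linarith

lemma inv_sub_div_sq_le_inv {a x : ℝ} (ha : 0 < a) (hx : 0 < x) :
    a⁻¹ - (x - a) / a ^ 2 ≤ x⁻¹ := by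
  rcases eq_or_ne x a with rfl | hxa
  · simp
  · exact (inv_sub_div_sq_lt_inv ha hx hxa).le

lemma setIntegral_pos_of_pos_on_isOpen {X : Type*} [TopologicalSpace X] [MeasurableSpace X]
    {μ : Measure X} [μ.IsOpenPosMeasure] {f : X → ℝ} {s U : Set X}
    (hf : 0 ≤ᵐ[μ.restrict s] f) (hfi : IntegrableOn f s μ) (hU : IsOpen U) (hUne : U.Nonempty)
    (hUs : U ⊆ s) (hpos : ∀ x ∈ U, 0 < f x) : 0 < ∫ x in s, f x ∂μ :=
  (setIntegral_pos_iff_support_of_nonneg_ae hf hfi).2 <| (hU.measure_pos μ hUne).trans_le <|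
    measure_mono fun x hx => ⟨(hpos x hx).ne', hUs hx⟩

lemma setIntegral_Icc_comp_perm {ι E : Type*} [Fintype ι] [NormedAddCommGroup E]
    [NormedSpace ℝ E] (e : Equiv.Perm ι) (a b : ℝ) (f : (ι → ℝ) → E) :
    ∫ q in Set.Icc (fun _ => a) (fun _ => b), f (q ∘ e) =
      ∫ q in Set.Icc (fun _ => a) (fun _ => b), f q := by
  have hT : ⇑(MeasurableEquiv.piCongrLeft (fun _ : ι => ℝ) e.symm) = fun q => q ∘ e :=
    funext fun q => funext fun i => by
      simpa [MeasurableEquiv.coe_piCongrLeft] using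
        Equiv.piCongrLeft_apply_apply (fun _ : ι => ℝ) e.symm q (e i)
  have hpre : (fun q : ι → ℝ => q ∘ e) ⁻¹' Set.Icc (fun _ => a) (fun _ => b) =
      Set.Icc (fun _ => a) (fun _ => b) := by
    ext q
    simp only [Set.mem_preimage, Set.mem_Icc, Pi.le_def, Function.comp_apply]
    exact ⟨fun h => ⟨fun i => by simpa using h.1 (e.symm i),
      fun i => by simpa using h.2 (e.symm i)⟩, fun h => ⟨fun i => h.1 (e i), fun i => h.2 (e i)⟩⟩
  have := (volume_measurePreserving_piCongrLeft (fun _ : ι => ℝ) e.symm).setIntegral_preimage_emb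
    (MeasurableEquiv.piCongrLeft _ e.symm).measurableEmbedding f (Set.Icc (fun _ => a) (fun _ => b))
  rwa [hT, hpre] at this

lemma εD_nonneg (q : Fin 3 → ℝ) : 0 ≤ εD q :=
  mul_nonneg zero_le_two (Finset.sum_nonneg fun _ _ => sub_nonneg.2 (cos_le_one _))

lemma continuous_εD : Continuous εD := by
  unfold εD; fun_prop

lemma norm_sq_le_mul_εD {q : Fin 3 → ℝ} (hq : q ∈ cube3) : ‖q‖ ^ 2 ≤ π ^ 2 / 4 * εD q := by
  have hcoord (i : Fin 3) : q i ^ 2 ≤ π ^ 2 / 4 * εD q :=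
    calc q i ^ 2 = π ^ 2 / 4 * (2 * (2 / π ^ 2 * q i ^ 2)) := by field_simp; ring
      _ ≤ π ^ 2 / 4 * (2 * (1 - cos (q i))) := by
        gcongr
        linarith [cos_le_one_sub_mul_cos_sq (abs_le.2 ⟨hq.1 i, hq.2 i⟩)]
      _ ≤ π ^ 2 / 4 * εD q := by
        unfold εD
        gcongr
        exact Finset.single_le_sum (f := fun j => 1 - cos (q j))
          (fun _ _ => sub_nonneg.2 (cos_le_one _)) (Finset.mem_univ i)
  have hnorm : ‖q‖ ≤ √(π ^ 2 / 4 * εD q) :=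
    (pi_norm_le_iff_of_nonneg (sqrt_nonneg _)).2 fun i => abs_le_sqrt (hcoord i)
  exact (le_sqrt (norm_nonneg q) (by have := εD_nonneg q; positivity)).1 hnorm

lemma εD_pos {q : Fin 3 → ℝ} (hq : q ∈ cube3) (h0 : q ≠ 0) : 0 < εD q := by
  have := norm_sq_le_mul_εD hq
  have : 0 < ‖q‖ ^ 2 := by positivity
  nlinarith [pi_pos]

lemma ae_restrict_cube3_εD_pos : ∀ᵐ q ∂volume.restrict cube3, 0 < εD q := by
  have hne : ∀ᵐ q : Fin 3 → ℝ ∂volume.restrict cube3, q ≠ 0 :=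
    ae_restrict_of_ae (compl_mem_ae_iff.2 (measure_singleton 0))
  filter_upwards [ae_restrict_mem measurableSet_Icc, hne] with q hq h0
  exact εD_pos hq h0

lemma integrableOn_inv_εD : IntegrableOn (fun q => (εD q)⁻¹) cube3 := by
  -- `ε⁻¹` is dominated by `‖q‖⁻²` only on the cube: `ε` also vanishes on `2πℤ³ \ {0}`
  have hbound (q : Fin 3 → ℝ) :
      ‖cube3.indicator (fun q => (εD q)⁻¹) q‖ ≤ π ^ 2 / 4 * ‖q‖ ^ (-2 : ℝ) := by
    by_cases hq : q ∈ cube3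
    · rcases eq_or_ne q 0 with rfl | h0
      · simp [εD]
      rw [Set.indicator_of_mem hq, norm_inv, norm_of_nonneg (εD_nonneg q), rpow_neg (norm_nonneg q),
        rpow_two]
      calc (εD q)⁻¹ ≤ (4 / π ^ 2 * ‖q‖ ^ 2)⁻¹ := by
            apply inv_anti₀ (by positivity)
            have := norm_sq_le_mul_εD hq
            field_simp
            linarith
        _ = π ^ 2 / 4 * (‖q‖ ^ 2)⁻¹ := by rw [mul_inv, inv_div]
    · rw [Set.indicator_of_notMem hq, norm_zero]
      positivity
  have hloc : LocallyIntegrable (cube3.indicator fun q => (εD q)⁻¹) volume :=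
    locallyIntegrable_of_norm_le_rpow (by simp) (by simp; norm_num) (ae_of_all _ hbound)
      (continuous_εD.measurable.inv.indicator measurableSet_Icc).aestronglyMeasurable
  exact (hloc.integrableOn_isCompact isCompact_Icc).congr_fun
    (fun q hq => Set.indicator_of_mem hq _) measurableSet_Icc

lemma integrableOn_cos_mul_inv_εD (i : Fin 3) :
    IntegrableOn (fun q => cos (q i) * (εD q)⁻¹) cube3 :=
  integrableOn_inv_εD.bdd_mul (continuous_cos.comp (continuous_apply i)).aestronglyMeasurable
    (ae_of_all _ fun q => abs_cos_le_one (q i))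

lemma integrableOn_cube3_const (c : ℝ) : IntegrableOn (fun _ => c) cube3 :=
  continuous_const.integrableOn_Icc

lemma εD_comp_perm (e : Equiv.Perm (Fin 3)) (q : Fin 3 → ℝ) : εD (q ∘ e) = εD q := by
  simp only [εD, Function.comp_apply, Equiv.sum_comp e fun i => 1 - cos (q i)]

lemma setIntegral_cos_mul_inv_εD_eq_coord_zero (i : Fin 3) :
    ∫ q in cube3, cos (q i) * (εD q)⁻¹ = ∫ q in cube3, cos (q 0) * (εD q)⁻¹ := by
  have := setIntegral_Icc_comp_perm (Equiv.swap 0 i) (-π) π fun q => cos (q 0) * (εD q)⁻¹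
  simpa [cube3, εD_comp_perm] using this

lemma setIntegral_cos_coord (i : Fin 3) : ∫ q in cube3, cos (q i) = 0 := by
  classical
  have hcube : volume.restrict cube3 = Measure.pi fun _ => volume.restrict (Set.Icc (-π) π) := by
    rw [cube3, ← Set.pi_univ_Icc, volume_pi, Measure.restrict_pi_pi]
  have hcos : ∫ x in Set.Icc (-π) π, cos x = 0 := by
    rw [integral_Icc_eq_integral_Ioc, ← intervalIntegral.integral_of_le (by linarith [pi_pos])]
    simp
  rw [hcube,
    ← integral_map (measurable_pi_apply i).aemeasurable continuous_cos.aestronglyMeasurable,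
    Measure.pi_map_eval, integral_smul_measure, hcos, smul_zero]

lemma setIntegral_εD : ∫ q in cube3, εD q = 6 * volume.real cube3 := by
  have hint (i : Fin 3) : IntegrableOn (fun q : Fin 3 → ℝ => cos (q i)) cube3 :=
    (continuous_cos.comp (continuous_apply i)).integrableOn_Icc
  simp only [εD, Finset.sum_sub_distrib, Finset.sum_const, Finset.card_univ, Fintype.card_fin,
    nsmul_eq_mul, Nat.cast_ofNat, mul_one]
  rw [integral_const_mul,
    integral_sub (integrableOn_cube3_const 3) (integrable_finsetSum _ fun i _ => hint i),
    integral_finsetSum _ fun i _ => hint i, setIntegral_const, smul_eq_mul]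
  simp only [setIntegral_cos_coord, Finset.sum_const_zero]
  ring

lemma setIntegral_cos_mul_inv_εD_eq_sub :
    ∫ q in cube3, cos (q 0) * (εD q)⁻¹ = (∫ q in cube3, (εD q)⁻¹) - volume.real cube3 / 6 := by
  have hsum : ∫ q in cube3, ∑ i, cos (q i) * (εD q)⁻¹ =
      3 * ∫ q in cube3, cos (q 0) * (εD q)⁻¹ := by
    rw [integral_finsetSum _ fun i _ => integrableOn_cos_mul_inv_εD i]
    simp [setIntegral_cos_mul_inv_εD_eq_coord_zero]
  have hpointwise : ∀ᵐ q ∂volume.restrict cube3,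
      ∑ i, cos (q i) * (εD q)⁻¹ = 3 * (εD q)⁻¹ - 1 / 2 := by
    filter_upwards [ae_restrict_cube3_εD_pos] with q hq
    rw [← Finset.sum_mul]
    have : ∑ i, cos (q i) = 3 - εD q / 2 := by simp only [εD, Fin.sum_univ_three]; ring
    rw [this]
    field_simp
  rw [integral_congr_ae hpointwise, integral_sub (integrableOn_inv_εD.const_mul 3)
    (integrableOn_cube3_const (1 / 2)), integral_const_mul, setIntegral_const, smul_eq_mul] at hsum
  linarith

lemma exists_isOpen_subset_cube3_six_lt_εD :
    ∃ U ⊆ cube3, IsOpen U ∧ U.Nonempty ∧ ∀ q ∈ U, 6 < εD q := by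
  refine ⟨{q | 6 < εD q} ∩ Set.univ.pi fun _ => Set.Ioo (-π) π, fun q hq => ?_,
    (isOpen_lt continuous_const continuous_εD).inter
      (isOpen_set_pi Set.finite_univ fun _ _ => isOpen_Ioo), ⟨fun _ => 3, ?_, ?_⟩,
    fun q hq => hq.1⟩
  · exact ⟨fun i => (hq.2 i trivial).1.le, fun i => (hq.2 i trivial).2.le⟩
  · have : cos 3 < 0 :=
      cos_neg_of_pi_div_two_lt_of_lt (by linarith [pi_lt_d2]) (by linarith [pi_gt_three])
    simp only [Set.mem_ofPred_eq, εD, Fin.sum_univ_three]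
    linarith
  · exact fun _ _ => ⟨by linarith [pi_gt_three], pi_gt_three⟩

lemma lt_setIntegral_inv_εD : volume.real cube3 / 6 < ∫ q in cube3, (εD q)⁻¹ := by
  have hεint : IntegrableOn εD cube3 := continuous_εD.integrableOn_Icc
  have hdev_int : IntegrableOn (fun q => (εD q - 6) / 6 ^ 2) cube3 :=
    (hεint.sub (integrableOn_cube3_const 6)).div_const _
  have htangent_int : IntegrableOn (fun q => 6⁻¹ - (εD q - 6) / 6 ^ 2) cube3 :=
    (integrableOn_cube3_const _).sub hdev_int
  have htangent : ∫ q in cube3, (6⁻¹ - (εD q - 6) / 6 ^ 2) = volume.real cube3 / 6 := by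
    rw [integral_sub (integrableOn_cube3_const _) hdev_int, integral_div,
      integral_sub hεint (integrableOn_cube3_const 6), setIntegral_εD, setIntegral_const,
      setIntegral_const, smul_eq_mul, smul_eq_mul]
    ring
  obtain ⟨U, hUs, hU, hUne, hUpos⟩ := exists_isOpen_subset_cube3_six_lt_εD
  have hgap : 0 < ∫ q in cube3, ((εD q)⁻¹ - (6⁻¹ - (εD q - 6) / 6 ^ 2)) := by
    refine setIntegral_pos_of_pos_on_isOpen ?_ (integrableOn_inv_εD.sub htangent_int) hU hUne hUs
      fun q hq => sub_pos.2 (inv_sub_div_sq_lt_inv (by norm_num) (by linarith [hUpos q hq])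
        (hUpos q hq).ne')
    filter_upwards [ae_restrict_cube3_εD_pos] with q hq
    exact sub_nonneg.2 (inv_sub_div_sq_le_inv (by norm_num) hq)
  rw [integral_sub integrableOn_inv_εD htangent_int, htangent] at hgap
  linarith

/-- the Watson integral `c = (2π)⁻³ ∫ cos(q₁) dq/ε(q)` is
positive. -/
theorem watson_integral_cos_pos :
    0 < ((2 * π) ^ 3)⁻¹ * ∫ q in cube3, Real.cos (q 0) * (εD q)⁻¹ := by
  rw [setIntegral_cos_mul_inv_εD_eq_sub]
  exact mul_pos (by positivity) (sub_pos.2 lt_setIntegral_inv_εD)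
end
end

section
/- Let ε(q) = 2·Σ_{i=1}^{3}(1 − cos qᵢ) and s = (2π)^{−3} ∫_{[−π,π]³} sin²(q₁) dq/ε(q). If λ ∈ ℝ satisfies λ·s = −1, then for every μ ∈ ℝ and every p ∈ ℝ³: (2π)^{−3} ∫_{[−π,π]³} (μ + λ·Σ_{i=1}^{3} cos(pᵢ − qᵢ))·sin(q₁)/ε(q) dq = −sin(p₁). -/
/-!
Expanding `cos (pᵢ - qᵢ) = cos pᵢ cos qᵢ + sin pᵢ sin qᵢ` splits the integrand into
`(μ + λ ∑ cos pᵢ cos qᵢ) sin q₁ / ε`, odd under `q₁ ↦ -q₁`, and the terms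
`λ sin pᵢ sin qᵢ sin q₁ / ε`, odd under `qᵢ ↦ -qᵢ` for `i ≠ 1`. Since `ε` and the cube are invariant
under every coordinate reflection, only `λ sin p₁ ∫ sin² q₁ / ε = (2π)³ λ s sin p₁` survives.
All pieces are continuous functions times `sin q₁ / ε`, which is integrable on the cube because
`ε(q) ≥ 4‖q‖² / π²` there, so `|sin q₁ / ε(q)| ≤ π² / (4‖q‖)`, and `‖q‖⁻¹` is locally integrable
in dimension 3.
-/

open MeasureTheory Real

noncomputable section

section Reflection

variable {ι : Type*} [DecidableEq ι]

def reflectCoord (j : ι) (q : ι → ℝ) : ι → ℝ := fun i => if i = j then -q i else q i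

@[simp]
lemma reflectCoord_apply_self (j : ι) (q : ι → ℝ) : reflectCoord j q j = -q j := if_pos rfl

lemma reflectCoord_apply_of_ne {i j : ι} (h : i ≠ j) (q : ι → ℝ) :
    reflectCoord j q i = q i := if_neg h

lemma reflectCoord_involutive (j : ι) : Function.Involutive (reflectCoord j) := by
  intro q; funext i; unfold reflectCoord; split_ifs <;> simp

lemma reflectCoord_preimage_Icc_neg (j : ι) (a : ι → ℝ) :
    reflectCoord j ⁻¹' Set.Icc (-a) a = Set.Icc (-a) a := by
  ext q
  simp only [Set.mem_preimage, Set.mem_Icc, Pi.le_def, ← forall_and, Pi.neg_apply]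
  refine forall_congr' fun i => ?_
  by_cases h : i = j
  · subst h
    rw [reflectCoord_apply_self, neg_le_neg_iff, neg_le, and_comm]
  · rw [reflectCoord_apply_of_ne h]

variable [Fintype ι]

lemma measurePreserving_reflectCoord (j : ι) : MeasurePreserving (reflectCoord j) :=
  volume_preserving_pi (f := fun i (t : ℝ) => if i = j then -t else t) fun i => by
    by_cases h : i = j
    · simp only [h, if_true]; exact Measure.measurePreserving_neg _
    · simp only [h, if_false]; exact MeasurePreserving.id _

lemma setIntegral_Icc_neg_comp_reflectCoord {E : Type*} [NormedAddCommGroup E] [NormedSpace ℝ E]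
    (j : ι) (a : ι → ℝ) (f : (ι → ℝ) → E) :
    ∫ q in Set.Icc (-a) a, f (reflectCoord j q) = ∫ q in Set.Icc (-a) a, f q := by
  have hmeas : Measurable (reflectCoord j) := (measurePreserving_reflectCoord j).measurable
  have := (measurePreserving_reflectCoord j).setIntegral_preimage_emb
    (MeasurableEquiv.ofInvolutive _ (reflectCoord_involutive j) hmeas).measurableEmbedding f
    (Set.Icc (-a) a)
  rwa [reflectCoord_preimage_Icc_neg] at this

lemma setIntegral_Icc_neg_eq_zero_of_odd {E : Type*} [NormedAddCommGroup E] [NormedSpace ℝ E]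
    (j : ι) (a : ι → ℝ) {f : (ι → ℝ) → E} (hf : ∀ q, f (reflectCoord j q) = -f q) :
    ∫ q in Set.Icc (-a) a, f q = 0 := by
  have := setIntegral_Icc_neg_comp_reflectCoord j a f
  rw [funext hf, integral_neg, neg_eq_iff_add_eq_zero, ← two_smul ℝ] at this
  exact (smul_eq_zero.mp this).resolve_left two_ne_zero

end Reflection

lemma εD_reflectCoord (j : Fin 3) (q : Fin 3 → ℝ) : εD (reflectCoord j q) = εD q := by
  unfold εD reflectCoord
  congr 1
  refine Finset.sum_congr rfl fun i _ => ?_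
  split_ifs <;> simp

lemma sq_le_εD {q : Fin 3 → ℝ} (hq : q ∈ cube3) (i : Fin 3) : 4 / π ^ 2 * q i ^ 2 ≤ εD q := by
  have hqi : |q i| ≤ π := abs_le.mpr ⟨hq.1 i, hq.2 i⟩
  have hterm : 2 / π ^ 2 * q i ^ 2 ≤ 1 - cos (q i) := by
    linarith [cos_le_one_sub_mul_cos_sq hqi]
  have hsum : 1 - cos (q i) ≤ ∑ k, (1 - cos (q k)) :=
    Finset.single_le_sum (f := fun k => 1 - cos (q k))
      (fun k _ => sub_nonneg.mpr (cos_le_one (q k))) (Finset.mem_univ i)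
  unfold εD
  linarith [show 4 / π ^ 2 * q i ^ 2 = 2 * (2 / π ^ 2 * q i ^ 2) by ring]

lemma norm_sq_le_εD {q : Fin 3 → ℝ} (hq : q ∈ cube3) : 4 / π ^ 2 * ‖q‖ ^ 2 ≤ εD q := by
  obtain ⟨i, -, hi⟩ := Finset.exists_mem_eq_sup Finset.univ Finset.univ_nonempty fun k => ‖q k‖₊
  have hnorm : ‖q‖ = |q i| := by rw [Pi.norm_def, hi]; rfl
  rw [hnorm, sq_abs]
  exact sq_le_εD hq i

lemma abs_sin_div_εD_le {q : Fin 3 → ℝ} (hq : q ∈ cube3) :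
    |sin (q 0) / εD q| ≤ π ^ 2 / 4 * ‖q‖ ^ (-1 : ℝ) := by
  rcases eq_or_ne q 0 with rfl | hq0
  · simp
  have hnorm : 0 < ‖q‖ := norm_pos_iff.mpr hq0
  have hε : 4 / π ^ 2 * ‖q‖ ^ 2 ≤ εD q := norm_sq_le_εD hq
  have hεpos : 0 < εD q := lt_of_lt_of_le (by positivity) hε
  calc |sin (q 0) / εD q| = |sin (q 0)| / εD q := by rw [abs_div, abs_of_pos hεpos]
    _ ≤ ‖q‖ / (4 / π ^ 2 * ‖q‖ ^ 2) :=
      div_le_div₀ (norm_nonneg q) (abs_sin_le_abs.trans (norm_le_pi_norm q 0)) (by positivity) hε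
    _ = π ^ 2 / 4 * ‖q‖ ^ (-1 : ℝ) := by
      rw [rpow_neg_one]; field_simp

lemma integrableOn_sin_div_εD : IntegrableOn (fun q => sin (q 0) / εD q) cube3 := by
  have hmeas : Measurable fun q : Fin 3 → ℝ => sin (q 0) / εD q := by unfold εD; fun_prop
  have hloc : LocallyIntegrable (cube3.indicator fun q => sin (q 0) / εD q) :=
    locallyIntegrable_of_norm_le_rpow (C := π ^ 2 / 4) (α := 1) (by simp) (by simp)
      (ae_of_all _ fun q => by
        by_cases hq : q ∈ cube3
        · simpa only [Set.indicator_of_mem hq, norm_eq_abs] using abs_sin_div_εD_le hq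
        · simp [Set.indicator_of_notMem hq]; positivity)
      (hmeas.indicator measurableSet_Icc).aestronglyMeasurable
  exact (hloc.integrableOn_isCompact isCompact_Icc).congr_fun
    (fun q hq => Set.indicator_of_mem hq _) measurableSet_Icc

lemma integrableOn_mul_sin_div_εD {c : (Fin 3 → ℝ) → ℝ} (hc : Continuous c) :
    IntegrableOn (fun q => c q * (sin (q 0) / εD q)) cube3 :=
  integrableOn_sin_div_εD.continuousOn_mul hc.continuousOn isCompact_Icc

lemma integral_even_mul_sin_div_εD {c : (Fin 3 → ℝ) → ℝ}
    (hc : ∀ q, c (reflectCoord 0 q) = c q) :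
    ∫ q in cube3, c q * (sin (q 0) / εD q) = 0 :=
  setIntegral_Icc_neg_eq_zero_of_odd 0 _ fun q => by
    rw [hc, εD_reflectCoord, reflectCoord_apply_self, sin_neg]; ring

lemma integral_sin_mul_sin_div_εD_of_ne {j : Fin 3} (hj : j ≠ 0) :
    ∫ q in cube3, sin (q j) * (sin (q 0) / εD q) = 0 :=
  setIntegral_Icc_neg_eq_zero_of_odd j _ fun q => by
    rw [εD_reflectCoord, reflectCoord_apply_self, reflectCoord_apply_of_ne hj.symm, sin_neg]; ring

/-- if `λ·s = -1`, then the odd function `sin p₁` is an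
eigenfunction of the threshold Birman–Schwinger operator with eigenvalue `-1`,
for every `μ`. -/
theorem odd_threshold_eigenfunction
    (s : ℝ)
    (hs : s = ((2 * π) ^ 3)⁻¹ * ∫ q in cube3, (Real.sin (q 0)) ^ 2 * (εD q)⁻¹)
    (lam : ℝ) (hlam : lam * s = -1) :
    ∀ (μ : ℝ) (p : Fin 3 → ℝ),
      ((2 * π) ^ 3)⁻¹ *
        ∫ q in cube3, (μ + lam * ∑ i, Real.cos (p i - q i)) * Real.sin (q 0) / εD q
          = -Real.sin (p 0) := by
  intro μ p
  set c : (Fin 3 → ℝ) → ℝ := fun q => μ + lam * ∑ i, cos (p i) * cos (q i)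
  have hsplit : ∀ q, (μ + lam * ∑ i, cos (p i - q i)) * sin (q 0) / εD q =
      c q * (sin (q 0) / εD q) + ∑ i, lam * sin (p i) * (sin (q i) * (sin (q 0) / εD q)) := by
    intro q
    simp only [c, cos_sub, Fin.sum_univ_three]
    ring
  have hc_even : ∀ q, c (reflectCoord 0 q) = c q := fun q => by
    simp only [c, reflectCoord, apply_ite cos, cos_neg, ite_self]
  have hc_int : IntegrableOn (fun q => c q * (sin (q 0) / εD q)) cube3 :=
    integrableOn_mul_sin_div_εD (by fun_prop)
  have hsin_int : ∀ i, IntegrableOn (fun q => sin (q i) * (sin (q 0) / εD q)) cube3 :=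
    fun i => integrableOn_mul_sin_div_εD (by fun_prop)
  have hsq : ∫ q in cube3, sin (q 0) * (sin (q 0) / εD q) = (2 * π) ^ 3 * s := by
    rw [hs, mul_inv_cancel_left₀ (by positivity)]
    congr 1 with q
    ring
  have hsin_off : ∀ j ≠ 0, ∫ q in cube3, lam * sin (p j) * (sin (q j) * (sin (q 0) / εD q)) = 0 :=
    fun j hj => by rw [integral_const_mul, integral_sin_mul_sin_div_εD_of_ne hj, mul_zero]
  simp_rw [hsplit]
  rw [integral_add hc_int (integrable_finsetSum _ fun i _ => (hsin_int i).const_mul _),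
    integral_even_mul_sin_div_εD hc_even, zero_add,
    integral_finsetSum _ fun i _ => (hsin_int i).const_mul _,
    Finset.sum_eq_single 0 (fun j _ hj => hsin_off j hj) (by simp), integral_const_mul, hsq]
  field_simp
  linear_combination sin (p 0) * hlam
end
end
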